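/- In the Vertex Cover reduction for row labeling: given a graph G with a vertex cover S of size at most k, the assignment that labels vertex rows in S as K, vertex rows outside S as KV, and all edge rows as V is feasible (satisfies both alignment constraints) and achieves objective ∑ = |S|·log λ + (n − |S|)·log μ ≥ k·log λ + (n−k)·log μ, where 0 < λ < μ < 1; conversely any feasible assignment with objective at least k·log λ + (n−k)·log μ yields a vertex cover of size at most k given by the K-labeled vertex rows. -/
import Mathlib


/-- The four row labels. -/
inductive Lab | K | V | KV | M
deriving DecidableEq

/-- Rows of the reduction: one row per vertex (`inl`) and one per edge (`inr`). -/
abbrev Row (n m : ℕ) := Fin n ⊕ Fin m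

/-- Index of a row: vertex rows come first (indices `0..n-1`), then edge rows. -/
def idx (n m : ℕ) : Row n m → ℕ := Sum.elim Fin.val (fun k => n + k.val)

/-- Vertex `v` is incident to edge `k` (with endpoint map `e`). -/
def incident {n m : ℕ} (e : Fin m → Fin n × Fin n) (v : Fin n) (k : Fin m) : Prop :=
  (e k).1 = v ∨ (e k).2 = v

/-- Alignment of the reduction: a vertex row aligns with an edge row iff the vertex is an
endpoint of the edge; any two vertex rows align; no two edge rows align. -/
def Align {n m : ℕ} (e : Fin m → Fin n × Fin n) : Row n m → Row n m → Prop
  | .inl _, .inl _ => True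
  | .inl v, .inr k => incident e v k
  | .inr k, .inl v => incident e v k
  | .inr _, .inr _ => False

/-- Probabilities of the reduction: edge rows have `Prob_V = 1` and `0` otherwise; vertex
rows have `Prob_K = λ`, `Prob_KV = μ` and `0` otherwise. -/
def Prob {n m : ℕ} (lam mu : ℝ) : Row n m → Lab → ℝ
  | .inl _, .K => lam
  | .inl _, .KV => mu
  | .inl _, _ => 0
  | .inr _, .V => 1
  | .inr _, _ => 0

/-- Feasibility: each `K`-row has a later aligned `V`-row; each `V`-row has an earlier
aligned `K`-row. -/
def Feasible {n m : ℕ} (e : Fin m → Fin n × Fin n) (ℓ : Row n m → Lab) : Prop :=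
  (∀ r, ℓ r = Lab.K → ∃ s, idx n m r < idx n m s ∧ Align e r s ∧ ℓ s = Lab.V) ∧
  (∀ r, ℓ r = Lab.V → ∃ s, idx n m s < idx n m r ∧ Align e s r ∧ ℓ s = Lab.K)

/-- The log-probability objective of an assignment. -/
noncomputable def objective {n m : ℕ} (lam mu : ℝ) (ℓ : Row n m → Lab) : ℝ :=
  ∑ r : Row n m, Real.log (Prob lam mu r (ℓ r))

lemma obj_eq {n m : ℕ} (lam mu : ℝ) (ℓ : Row n m → Lab)
    (hK : ∀ v, ℓ (Sum.inl v) = Lab.K ∨ ℓ (Sum.inl v) = Lab.KV)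
    (hV : ∀ j, ℓ (Sum.inr j) = Lab.V) :
    objective lam mu ℓ =
      ((Finset.univ.filter (fun v : Fin n => ℓ (.inl v) = Lab.K)).card : ℝ) * Real.log lam +
      ((n : ℝ) - (Finset.univ.filter (fun v : Fin n => ℓ (.inl v) = Lab.K)).card) * Real.log mu := by
  classical
  set T := Finset.univ.filter (fun v : Fin n => ℓ (.inl v) = Lab.K) with hT
  set T' : Finset (Fin n) := Finset.univ.filter (fun v : Fin n => ¬ (ℓ (Sum.inl v) = Lab.K)) with hT'
  have hTn : T.card ≤ n := by simpa using Finset.card_filter_le (Finset.univ : Finset (Fin n)) (fun v => ℓ (Sum.inl v) = Lab.K)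
  unfold objective
  rw [Fintype.sum_sum_type]
  have h2 : ∑ j : Fin m, Real.log (Prob lam mu (Sum.inr j : Row n m) (ℓ (Sum.inr j))) = 0 := by
    apply Finset.sum_eq_zero
    intro j _
    rw [hV j]
    simp [Prob]
  rw [h2, add_zero]
  have hsplit : ∑ v : Fin n, Real.log (Prob lam mu (Sum.inl v : Row n m) (ℓ (Sum.inl v))) =
      (∑ v ∈ T, Real.log (Prob lam mu (Sum.inl v : Row n m) (ℓ (Sum.inl v)))) +
      ∑ v ∈ T', Real.log (Prob lam mu (Sum.inl v : Row n m) (ℓ (Sum.inl v))) :=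
    (Finset.sum_filter_add_sum_filter_not Finset.univ _ _).symm
  rw [hsplit]
  have hA : ∑ v ∈ T, Real.log (Prob lam mu (Sum.inl v : Row n m) (ℓ (Sum.inl v))) =
      (T.card : ℝ) * Real.log lam := by
    have : ∀ v ∈ T, Real.log (Prob lam mu (Sum.inl v : Row n m) (ℓ (Sum.inl v))) = Real.log lam := by
      intro v hv
      rw [hT] at hv
      rw [(Finset.mem_filter.1 hv).2]
      rfl
    rw [Finset.sum_congr rfl this, Finset.sum_const, nsmul_eq_mul]
  have hB : ∑ v ∈ T', Real.log (Prob lam mu (Sum.inl v : Row n m) (ℓ (Sum.inl v))) =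
      ((n : ℝ) - T.card) * Real.log mu := by
    have hterm : ∀ v ∈ T', Real.log (Prob lam mu (Sum.inl v : Row n m) (ℓ (Sum.inl v))) = Real.log mu := by
      intro v hv
      rw [hT'] at hv
      rw [(hK v).resolve_left (Finset.mem_filter.1 hv).2]
      rfl
    rw [Finset.sum_congr rfl hterm, Finset.sum_const, nsmul_eq_mul]
    congr 1
    have hc := Finset.card_filter_add_card_filter_not (s := (Finset.univ : Finset (Fin n)))
      (p := fun v : Fin n => ℓ (.inl v) = Lab.K)
    simp only [Finset.card_univ, Fintype.card_fin] at hc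
    have : T'.card = n - T.card := by rw [hT', hT]; omega
    rw [this, Nat.cast_sub hTn]
  rw [hA, hB]

/-- correctness of the Vertex Cover reduction.  Forward: from a vertex cover
`S` with `|S| ≤ k` (each of whose vertices covers some edge), the assignment labeling `S`'s
vertex rows `K`, the others `KV`, and all edge rows `V` is feasible, uses only positive
probabilities, and achieves objective `|S|·log λ + (n − |S|)·log μ ≥ k·log λ + (n−k)·log μ`.
Conversely, any feasible positive-probability assignment with objective at least
`k·log λ + (n−k)·log μ` yields a vertex cover of size at most `k`, namely the `K`-labeled
vertex rows. -/
theorem stmt_11 (n m k : ℕ) (e : Fin m → Fin n × Fin n)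
    (lam mu : ℝ) (hlam : 0 < lam) (hlm : lam < mu) (hmu : mu < 1) :
    ((∀ S : Finset (Fin n),
        (∀ j : Fin m, (e j).1 ∈ S ∨ (e j).2 ∈ S) →
        S.card ≤ k →
        (∀ v ∈ S, ∃ j : Fin m, incident e v j) →
        let ℓ : Row n m → Lab := fun r =>
          match r with
          | .inl v => if v ∈ S then Lab.K else Lab.KV
          | .inr _ => Lab.V
        Feasible e ℓ ∧ (∀ r, 0 < Prob lam mu r (ℓ r)) ∧
          objective lam mu ℓ =
            (S.card : ℝ) * Real.log lam + ((n : ℝ) - S.card) * Real.log mu ∧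
          (k : ℝ) * Real.log lam + ((n : ℝ) - k) * Real.log mu ≤ objective lam mu ℓ) ∧
     (∀ ℓ : Row n m → Lab,
        Feasible e ℓ → (∀ r, 0 < Prob lam mu r (ℓ r)) →
        (k : ℝ) * Real.log lam + ((n : ℝ) - k) * Real.log mu ≤ objective lam mu ℓ →
        (∀ j : Fin m, (e j).1 ∈ {v : Fin n | ℓ (.inl v) = Lab.K} ∨
            (e j).2 ∈ {v : Fin n | ℓ (.inl v) = Lab.K}) ∧
          (Finset.univ.filter (fun v : Fin n => ℓ (.inl v) = Lab.K)).card ≤ k)) := by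
  classical
  have hLM : Real.log lam < Real.log mu := Real.log_lt_log hlam hlm
  constructor
  · intro S hcov hcard hinc
    intro ℓ
    have hKlab : ∀ v, ℓ (Sum.inl v) = Lab.K ∨ ℓ (Sum.inl v) = Lab.KV := by
      intro v; by_cases hv : v ∈ S <;> simp [ℓ, hv]
    have hVlab : ∀ j, ℓ (Sum.inr j) = Lab.V := fun j => rfl
    have hfilt : Finset.univ.filter (fun v : Fin n => ℓ (.inl v) = Lab.K) = S := by
      ext v
      by_cases hv : v ∈ S <;> simp [ℓ, hv]
    have hobj := obj_eq lam mu ℓ hKlab hVlab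
    rw [hfilt] at hobj
    refine ⟨⟨?_, ?_⟩, ?_, hobj, ?_⟩
    · intro r hr
      rcases r with v | j
      · by_cases hv : v ∈ S
        · obtain ⟨j, hj⟩ := hinc v hv
          refine ⟨Sum.inr j, ?_, hj, rfl⟩
          have := v.isLt
          simp [idx]; omega
        · simp [ℓ, hv] at hr
      · simp [ℓ] at hr
    · intro r hr
      rcases r with v | j
      · rcases hKlab v with h | h <;> rw [hr] at h <;> simp at h
      · rcases hcov j with h | h
        · refine ⟨Sum.inl (e j).1, ?_, Or.inl rfl, by simp [ℓ, h]⟩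
          have := ((e j).1).isLt
          simp [idx]; omega
        · refine ⟨Sum.inl (e j).2, ?_, Or.inr rfl, by simp [ℓ, h]⟩
          have := ((e j).2).isLt
          simp [idx]; omega
    · intro r
      rcases r with v | j
      · by_cases hv : v ∈ S <;> simp [ℓ, hv, Prob]
        · exact hlam
        · linarith
      · simp [ℓ, Prob]
    · rw [hobj]
      have hcard' : (S.card : ℝ) ≤ k := by exact_mod_cast hcard
      nlinarith [mul_nonneg (sub_nonneg.2 hcard') (sub_nonneg.2 hLM.le)]
  · intro ℓ hfeas hpos hobj
    have hVlab : ∀ j, ℓ (Sum.inr j) = Lab.V := by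
      intro j
      have h := hpos (Sum.inr j)
      cases hc : ℓ (Sum.inr j) with
      | V => rfl
      | K => rw [hc] at h; norm_num [Prob] at h
      | KV => rw [hc] at h; norm_num [Prob] at h
      | M => rw [hc] at h; norm_num [Prob] at h
    have hKlab : ∀ v, ℓ (Sum.inl v) = Lab.K ∨ ℓ (Sum.inl v) = Lab.KV := by
      intro v
      have h := hpos (Sum.inl v)
      cases hc : ℓ (Sum.inl v) with
      | K => exact Or.inl rfl
      | KV => exact Or.inr rfl
      | V => rw [hc] at h; norm_num [Prob] at h
      | M => rw [hc] at h; norm_num [Prob] at h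
    constructor
    · intro j
      obtain ⟨s, _, hal, hsK⟩ := hfeas.2 (Sum.inr j) (hVlab j)
      rcases s with v | j'
      · rcases hal with h1 | h1
        · left; simp only [Set.mem_setOf_eq]; rw [h1]; exact hsK
        · right; simp only [Set.mem_setOf_eq]; rw [h1]; exact hsK
      · exact hal.elim
    · rw [obj_eq lam mu ℓ hKlab hVlab] at hobj
      set t := (Finset.univ.filter (fun v : Fin n => ℓ (.inl v) = Lab.K)).card with ht
      by_contra hc
      push_neg at hc
      have hc' : (k : ℝ) < t := by exact_mod_cast hc
      nlinarith [mul_pos (sub_pos.2 hc') (sub_pos.2 hLM)]
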